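/- arXiv:2305.03569 — 3 statements merged into one kernel-verified Lean document; each statement's English description precedes it below -/
import Mathlib

section
/- Under the constitutive relation R_g T_∞ ρ_* = p_{∞,*} + 2σ/R_* and c_v γ = c_v + R_g, for any real R, Ṙ, z and any square-integrable radial u on B_1 satisfying ∫_{B_1} u dx = -(4π/3) z - 4π(ρ_*/R_*) R, the linearized total energy E satisfies E ≥ 2π(4σ + 3p_{∞,*}R_*) R² + (c_v T_∞ R_*³/(2ρ_*)) ∫_{B_1} u² dx + 2π ρ_l R_*³ Ṙ². -/
/-!
Cauchy–Schwarz on the unit ball, `(∫ u)² ≤ (4π/3) ∫ u²`, rewritten through the mass constraint,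
bounds `(R_g T_∞ R_*³ / (2ρ_*)) ∫ u²` from below by a quadratic form in `(R, z)` whose `z²` and
`R z` terms are exactly those of the energy; the constitutive relation turns its `R²` coefficient
into the stated one. The thermal term pays for this multiple of `∫ u²` because
`c_v γ - c_v = R_g`.
-/

open Real MeasureTheory

theorem sq_integral_le_measureReal_mul_integral_sq {α : Type*} [MeasurableSpace α]
    {μ : Measure α} [IsFiniteMeasure μ] {f : α → ℝ} (hf : Integrable f μ)
    (hf2 : Integrable (fun x => f x ^ 2) μ) :
    (∫ x, f x ∂μ) ^ 2 ≤ μ.real Set.univ * ∫ x, f x ^ 2 ∂μ := by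
  have hquad : ∀ t : ℝ,
      0 ≤ μ.real Set.univ * (t * t) + (-2 * ∫ x, f x ∂μ) * t + ∫ x, f x ^ 2 ∂μ := by
    intro t
    have hlin : Integrable (fun x => t * t - 2 * t * f x) μ :=
      (integrable_const _).sub (hf.const_mul _)
    have hexpand : ∫ x, (t - f x) ^ 2 ∂μ
        = μ.real Set.univ * (t * t) + (-2 * ∫ x, f x ∂μ) * t + ∫ x, f x ^ 2 ∂μ := by
      have hpt : ∀ x, (t - f x) ^ 2 = (t * t - 2 * t * f x) + f x ^ 2 := fun _ => by ring
      simp only [hpt]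
      rw [integral_add hlin hf2, integral_sub (integrable_const _) (hf.const_mul _),
        integral_const, integral_const_mul, smul_eq_mul]
      ring
    exact hexpand ▸ integral_nonneg fun _ => sq_nonneg _
  -- `t ↦ ∫ (t - f)²` is a nonnegative quadratic, so its discriminant is nonpositive.
  have hdiscrim := discrim_le_zero hquad
  rw [discrim] at hdiscrim
  linarith

theorem measureReal_unitBall_fin_three :
    volume.real (Metric.ball (0 : EuclideanSpace ℝ (Fin 3)) 1) = 4 * π / 3 := by
  rw [measureReal_def, EuclideanSpace.volume_ball_fin_three, ENNReal.ofReal_one, one_pow, one_mul,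
    ENNReal.toReal_ofReal (by positivity)]
  ring

theorem mass_constrained_quadratic_form_lower_bound {pinf σ Rg Tinf ρs Rs z R I : ℝ}
    (hρs : 0 < ρs) (hRs : 0 < Rs) (hRgT : 0 ≤ Rg * Tinf)
    (hconst : Rg * Tinf * ρs = pinf + 2 * σ / Rs)
    (hCS : (-(4 * π / 3) * z - 4 * π * (ρs / Rs) * R) ^ 2 ≤ 4 * π / 3 * I) :
    2 * π * (4 * σ + 3 * pinf * Rs) * R ^ 2
      ≤ -4 * π * σ * R ^ 2 - 4 * π * Rg * Tinf * Rs ^ 2 * R * z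
        - (2 * π * Rg * Tinf * Rs ^ 3 / (3 * ρs)) * z ^ 2
        + (Rg * Tinf * Rs ^ 3 / (2 * ρs)) * I := by
  obtain rfl : pinf = Rg * Tinf * ρs - 2 * σ / Rs := by linarith
  have hgap : -4 * π * σ * R ^ 2 - 4 * π * Rg * Tinf * Rs ^ 2 * R * z
        - (2 * π * Rg * Tinf * Rs ^ 3 / (3 * ρs)) * z ^ 2 + (Rg * Tinf * Rs ^ 3 / (2 * ρs)) * I
        - 2 * π * (4 * σ + 3 * (Rg * Tinf * ρs - 2 * σ / Rs) * Rs) * R ^ 2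
      = 3 * (Rg * Tinf) * Rs ^ 3 / (8 * π * ρs)
          * (4 * π / 3 * I - (-(4 * π / 3) * z - 4 * π * (ρs / Rs) * R) ^ 2) := by
    field_simp
    ring
  have hk : 0 ≤ 3 * (Rg * Tinf) * Rs ^ 3 / (8 * π * ρs) := by positivity
  linarith [mul_nonneg hk (sub_nonneg.2 hCS)]

theorem linearized_energy_coercivity_general
    (pinf σ Rg Tinf cv γ ρl ρs Rs : ℝ)
    (hRg : 0 < Rg) (hT : 0 < Tinf)
    (hρl : 0 < ρl) (hρs : 0 < ρs) (hRs : 0 < Rs)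
    (hconst : Rg * Tinf * ρs = pinf + 2 * σ / Rs)
    (hcp : cv * γ = cv + Rg)
    (z R Rdot : ℝ)
    (u : EuclideanSpace ℝ (Fin 3) → ℝ)
    (hu : MeasureTheory.Integrable u
      (volume.restrict (Metric.ball (0 : EuclideanSpace ℝ (Fin 3)) 1)))
    (hu2 : MeasureTheory.Integrable (fun x => u x ^ 2)
      (volume.restrict (Metric.ball (0 : EuclideanSpace ℝ (Fin 3)) 1)))
    (hmass : (∫ x in Metric.ball (0 : EuclideanSpace ℝ (Fin 3)) 1, u x)
      = -(4 * π / 3) * z - 4 * π * (ρs / Rs) * R) :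
    2 * π * (4 * σ + 3 * pinf * Rs) * R ^ 2
      + (cv * Tinf * Rs ^ 3 / (2 * ρs)) *
          ∫ x in Metric.ball (0 : EuclideanSpace ℝ (Fin 3)) 1, u x ^ 2
      + 2 * π * ρl * Rs ^ 3 * Rdot ^ 2
    ≤ -4 * π * σ * R ^ 2 - 4 * π * Rg * Tinf * Rs ^ 2 * R * z
      - (2 * π * Rg * Tinf * Rs ^ 3 / (3 * ρs)) * z ^ 2
      + (cv * γ * Tinf * Rs ^ 3 / (2 * ρs)) *
          ∫ x in Metric.ball (0 : EuclideanSpace ℝ (Fin 3)) 1, u x ^ 2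
      + 2 * π * ρl * Rs ^ 3 * Rdot ^ 2 := by
  -- The integrals extend to the end of the line: the kinetic term sits inside both of them.
  set B := Metric.ball (0 : EuclideanSpace ℝ (Fin 3)) 1
  set c := 2 * π * ρl * Rs ^ 3 * Rdot ^ 2
  have : IsFiniteMeasure (volume.restrict B) := isFiniteMeasure_restrict.2 measure_ball_lt_top.ne
  have hCS : (-(4 * π / 3) * z - 4 * π * (ρs / Rs) * R) ^ 2 ≤ 4 * π / 3 * ∫ x in B, u x ^ 2 := by
    rw [← hmass, ← measureReal_unitBall_fin_three, ← measureReal_restrict_apply_univ]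
    exact sq_integral_le_measureReal_mul_integral_sq hu hu2
  have hquad := mass_constrained_quadratic_form_lower_bound hρs hRs (by positivity) hconst hCS
  have hmono : ∫ x in B, u x ^ 2 ≤ ∫ x in B, u x ^ 2 + c :=
    integral_mono hu2 (hu2.add (integrable_const c)) fun _ => le_add_of_nonneg_right (by positivity)
  have hsplit : cv * γ * Tinf * Rs ^ 3 / (2 * ρs)
      = cv * Tinf * Rs ^ 3 / (2 * ρs) + Rg * Tinf * Rs ^ 3 / (2 * ρs) := by
    rw [hcp]; ring
  have hRgT : 0 ≤ Rg * Tinf * Rs ^ 3 / (2 * ρs) := by positivity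
  rw [hsplit]
  linarith [mul_le_mul_of_nonneg_left hmono hRgT]

/-- Convexity/positivity of the linearized total energy: under the constitutive
relation and the linearized constant-mass constraint, the linearized energy is
bounded below by a positive definite quadratic form. -/
theorem linearized_energy_coercivity
    (pinf σ Rg Tinf cv γ ρl ρs Rs : ℝ)
    (hp : 0 < pinf) (hσ : 0 ≤ σ) (hRg : 0 < Rg) (hT : 0 < Tinf)
    (hcv : 0 < cv) (hγ : 1 < γ) (hρl : 0 < ρl) (hρs : 0 < ρs) (hRs : 0 < Rs)
    (hconst : Rg * Tinf * ρs = pinf + 2 * σ / Rs)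
    (hcp : cv * γ = cv + Rg)
    (z R Rdot : ℝ)
    (u : EuclideanSpace ℝ (Fin 3) → ℝ)
    (hu : MeasureTheory.Integrable u
      (volume.restrict (Metric.ball (0 : EuclideanSpace ℝ (Fin 3)) 1)))
    (hu2 : MeasureTheory.Integrable (fun x => u x ^ 2)
      (volume.restrict (Metric.ball (0 : EuclideanSpace ℝ (Fin 3)) 1)))
    (hmass : (∫ x in Metric.ball (0 : EuclideanSpace ℝ (Fin 3)) 1, u x)
      = -(4 * π / 3) * z - 4 * π * (ρs / Rs) * R) :
    2 * π * (4 * σ + 3 * pinf * Rs) * R ^ 2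
      + (cv * Tinf * Rs ^ 3 / (2 * ρs)) *
          ∫ x in Metric.ball (0 : EuclideanSpace ℝ (Fin 3)) 1, u x ^ 2
      + 2 * π * ρl * Rs ^ 3 * Rdot ^ 2
    ≤ -4 * π * σ * R ^ 2 - 4 * π * Rg * Tinf * Rs ^ 2 * R * z
      - (2 * π * Rg * Tinf * Rs ^ 3 / (3 * ρs)) * z ^ 2
      + (cv * γ * Tinf * Rs ^ 3 / (2 * ρs)) *
          ∫ x in Metric.ball (0 : EuclideanSpace ℝ (Fin 3)) 1, u x ^ 2
      + 2 * π * ρl * Rs ^ 3 * Rdot ^ 2 :=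
  linearized_energy_coercivity_general pinf σ Rg Tinf cv γ ρl ρs Rs hRg hT hρl hρs hRs hconst hcp z
    R Rdot u hu hu2 hmass
end

section
/- Let κ̄ > 0, γ > 1. Define Q(τ) = (1/(R_g T_∞))((4π/3) - (8(γ-1)/(πγ)) ∑_{j=1}^∞ τ/(j²(π²κ̄j² + τ)))(ρ_l R_* τ² + (4μ_l/R_*)τ - 2σ/R_*²) + 4π ρ_*/R_*, with all physical constants positive (μ_l, σ ≥ 0) and R_g T_∞ ρ_* = p_{∞,*} + 2σ/R_*. Then Q has no roots τ with Re τ ≥ 0; in particular Q(ξ) > 0 for all real ξ ≥ 0. -/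
/-!
Write `Q = c·A·B + C` with `c = 1/(R_g T_∞) > 0`, `C = 4πρ_*/R_* > 0`, the thermal factor
`A(τ) = 4π/3 - (8(γ-1)/(πγ)) S(τ)` and the mechanical factor
`B(τ) = ρ_l R_* τ² + (4μ_l/R_*) τ - 2σ/R_*²`.
For `a > 0` the map `τ ↦ τ/(a+τ)` sends the closed right half-plane into the closed unit disc,
with nonnegative real part and imaginary part of the sign of `Im τ`. Hence `0 ≤ Re S ≤ ∑ 1/j² = π²/6`,
so `0 < Re A ≤ 4π/3`, and `Im τ · Im A < 0` off the real axis, while always `Im τ · Im B ≥ 0`.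
Off the real axis `Im (conj A · Q) = c|A|² Im B - C Im A` then has the sign of `Im τ`, so `Q ≠ 0`.
On the real axis everything is real and `Q ≥ C - c (4π/3)(2σ/R_*²)`, which the equation of state
`R_g T_∞ ρ_* = p_∞ + 2σ/R_*` turns into a positive multiple of `p_∞ + 4σ/(3R_*)`.
-/

open Real Complex

/-- The resolvent denominator `Q(τ)` of the linearized bubble dynamics. -/
noncomputable def Qfun (κ γ Rg Tinf ρl Rs μl σ ρs : ℝ) (τ : ℂ) : ℂ :=
  (1 / ((Rg : ℂ) * (Tinf : ℂ))) *
    ((4 * (π : ℂ) / 3) -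
      (8 * ((γ : ℂ) - 1) / ((π : ℂ) * (γ : ℂ))) *
        ∑' j : ℕ, τ / (((j : ℂ) + 1) ^ 2 * ((π : ℂ) ^ 2 * (κ : ℂ) * ((j : ℂ) + 1) ^ 2 + τ))) *
    ((ρl : ℂ) * (Rs : ℂ) * τ ^ 2 + (4 * (μl : ℂ) / (Rs : ℂ)) * τ - 2 * (σ : ℂ) / (Rs : ℂ) ^ 2)
  + 4 * (π : ℂ) * (ρs : ℂ) / (Rs : ℂ)

section Mobius

variable {a : ℝ} {τ : ℂ}

theorem ofReal_add_re_pos (ha : 0 < a) (hτ : 0 ≤ τ.re) : 0 < ((a : ℂ) + τ).re := by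
  simp only [add_re, ofReal_re]; linarith

theorem norm_div_ofReal_add_le_one (ha : 0 < a) (hτ : 0 ≤ τ.re) : ‖τ / (a + τ)‖ ≤ 1 := by
  have hpos : 0 < ‖(a : ℂ) + τ‖ := norm_pos_iff.mpr fun h => by
    simpa [h] using ofReal_add_re_pos ha hτ
  rw [norm_div, div_le_one hpos, Complex.norm_def, Complex.norm_def]
  refine Real.sqrt_le_sqrt ?_
  simp only [normSq_apply, add_re, add_im, ofReal_re, ofReal_im, zero_add]
  nlinarith

theorem re_div_ofReal_add_nonneg (ha : 0 < a) (hτ : 0 ≤ τ.re) : 0 ≤ (τ / (a + τ)).re := by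
  have h := ofReal_add_re_pos ha hτ
  rw [div_re]
  exact add_nonneg (div_nonneg (mul_nonneg hτ h.le) (normSq_nonneg _))
    (div_nonneg (by simpa using mul_self_nonneg τ.im) (normSq_nonneg _))

theorem im_div_ofReal_add (a : ℝ) (τ : ℂ) :
    (τ / (a + τ)).im = a * τ.im / normSq (a + τ) := by
  simp only [div_im, add_re, add_im, ofReal_re, ofReal_im, zero_add]
  ring

end Mobius

section StieltjesSeries

variable {w a : ℕ → ℝ} {τ : ℂ}

theorem summable_ofReal_mul_div_add (hw : Summable w) (hw0 : ∀ j, 0 ≤ w j) (ha : ∀ j, 0 < a j)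
    (hτ : 0 ≤ τ.re) : Summable fun j => (w j : ℂ) * (τ / (a j + τ)) := by
  refine Summable.of_norm_bounded hw fun j => ?_
  rw [norm_mul, Complex.norm_real, Real.norm_of_nonneg (hw0 j)]
  exact mul_le_of_le_one_right (hw0 j) (norm_div_ofReal_add_le_one (ha j) hτ)

theorem re_tsum_ofReal_mul_div_add_nonneg (hw : Summable w) (hw0 : ∀ j, 0 ≤ w j)
    (ha : ∀ j, 0 < a j) (hτ : 0 ≤ τ.re) : 0 ≤ (∑' j, (w j : ℂ) * (τ / (a j + τ))).re := by
  rw [re_tsum (summable_ofReal_mul_div_add hw hw0 ha hτ)]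
  exact tsum_nonneg fun j => by
    rw [re_ofReal_mul]; exact mul_nonneg (hw0 j) (re_div_ofReal_add_nonneg (ha j) hτ)

theorem re_tsum_ofReal_mul_div_add_le (hw : Summable w) (hw0 : ∀ j, 0 ≤ w j)
    (ha : ∀ j, 0 < a j) (hτ : 0 ≤ τ.re) : (∑' j, (w j : ℂ) * (τ / (a j + τ))).re ≤ ∑' j, w j := by
  have hs := summable_ofReal_mul_div_add hw hw0 ha hτ
  rw [re_tsum hs]
  refine hs.mapL reCLM |>.tsum_le_tsum (fun j => ?_) hw
  rw [re_ofReal_mul]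
  exact mul_le_of_le_one_right (hw0 j)
    ((re_le_norm _).trans (norm_div_ofReal_add_le_one (ha j) hτ))

theorem im_mul_im_tsum_ofReal_mul_div_add_pos (hw : Summable w) (hw0 : ∀ j, 0 < w j)
    (ha : ∀ j, 0 < a j) (hτ : 0 ≤ τ.re) (him : τ.im ≠ 0) :
    0 < τ.im * (∑' j, (w j : ℂ) * (τ / (a j + τ))).im := by
  have hs := summable_ofReal_mul_div_add hw (fun j => (hw0 j).le) ha hτ
  have hterm : ∀ j, 0 < τ.im * ((w j : ℂ) * (τ / (a j + τ))).im := fun j => by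
    have hN : 0 < normSq ((a j : ℂ) + τ) :=
      normSq_pos.mpr fun h => by simpa [h] using ofReal_add_re_pos (ha j) hτ
    have hsq : 0 < τ.im ^ 2 := sq_pos_of_ne_zero him
    calc 0 < w j * a j * τ.im ^ 2 / normSq ((a j : ℂ) + τ) := by
          have := hw0 j; have := ha j; positivity
      _ = _ := by rw [im_ofReal_mul, im_div_ofReal_add]; ring
  rw [im_tsum hs, ← tsum_mul_left]
  exact ((hs.mapL imCLM).mul_left τ.im).tsum_pos (fun j => (hterm j).le) 0 (hterm 0)

end StieltjesSeries

theorem hasSum_one_div_succ_sq : HasSum (fun j : ℕ => 1 / ((j : ℝ) + 1) ^ 2) (π ^ 2 / 6) := by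
  have h := (hasSum_nat_add_iff' 1).mpr hasSum_zeta_two
  norm_num at h
  exact h.congr_fun fun j => by ring

noncomputable def bubbleSeries (κ : ℝ) (τ : ℂ) : ℂ :=
  ∑' j : ℕ, τ / (((j : ℂ) + 1) ^ 2 * ((π : ℂ) ^ 2 * (κ : ℂ) * ((j : ℂ) + 1) ^ 2 + τ))

section BubbleSeries

variable {κ : ℝ} {τ : ℂ}

theorem bubbleSeries_eq (κ : ℝ) (τ : ℂ) :
    bubbleSeries κ τ = ∑' j : ℕ, ((1 / ((j : ℝ) + 1) ^ 2 : ℝ) : ℂ) *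
      (τ / ((π ^ 2 * κ * ((j : ℝ) + 1) ^ 2 : ℝ) + τ)) := by
  refine tsum_congr fun j => ?_
  push_cast
  simp only [div_eq_mul_inv, mul_inv]
  ring

theorem bubbleSeries_ofReal_im (κ ξ : ℝ) : (bubbleSeries κ ξ).im = 0 := by
  have : bubbleSeries κ ξ =
      ((∑' j : ℕ, ξ / (((j : ℝ) + 1) ^ 2 * (π ^ 2 * κ * ((j : ℝ) + 1) ^ 2 + ξ)) : ℝ) : ℂ) := by
    rw [ofReal_tsum]
    push_cast
    rfl
  rw [this, ofReal_im]

theorem bubbleSeries_re_nonneg (hκ : 0 < κ) (hτ : 0 ≤ τ.re) : 0 ≤ (bubbleSeries κ τ).re := by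
  rw [bubbleSeries_eq]
  exact re_tsum_ofReal_mul_div_add_nonneg hasSum_one_div_succ_sq.summable
    (fun j => by positivity) (fun j => by positivity) hτ

theorem bubbleSeries_re_le (hκ : 0 < κ) (hτ : 0 ≤ τ.re) : (bubbleSeries κ τ).re ≤ π ^ 2 / 6 := by
  rw [bubbleSeries_eq, ← hasSum_one_div_succ_sq.tsum_eq]
  exact re_tsum_ofReal_mul_div_add_le hasSum_one_div_succ_sq.summable
    (fun j => by positivity) (fun j => by positivity) hτ

theorem im_mul_bubbleSeries_im_pos (hκ : 0 < κ) (hτ : 0 ≤ τ.re) (him : τ.im ≠ 0) :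
    0 < τ.im * (bubbleSeries κ τ).im := by
  rw [bubbleSeries_eq]
  exact im_mul_im_tsum_ofReal_mul_div_add_pos hasSum_one_div_succ_sq.summable
    (fun j => by positivity) (fun j => by positivity) hτ him

end BubbleSeries

noncomputable def thermalFactor (κ γ : ℝ) (τ : ℂ) : ℂ :=
  4 * (π : ℂ) / 3 - 8 * ((γ : ℂ) - 1) / ((π : ℂ) * (γ : ℂ)) * bubbleSeries κ τ

noncomputable def mechanicalFactor (ρl Rs μl σ : ℝ) (τ : ℂ) : ℂ :=
  (ρl : ℂ) * (Rs : ℂ) * τ ^ 2 + (4 * (μl : ℂ) / (Rs : ℂ)) * τ - 2 * (σ : ℂ) / (Rs : ℂ) ^ 2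

theorem Qfun_eq (κ γ Rg Tinf ρl Rs μl σ ρs : ℝ) (τ : ℂ) :
    Qfun κ γ Rg Tinf ρl Rs μl σ ρs τ =
      ((1 / (Rg * Tinf) : ℝ) : ℂ) * thermalFactor κ γ τ * mechanicalFactor ρl Rs μl σ τ
        + ((4 * π * ρs / Rs : ℝ) : ℂ) := by
  push_cast
  rfl

section ThermalFactor

variable {κ γ : ℝ} {τ : ℂ}

theorem thermalFactor_eq (κ γ : ℝ) (τ : ℂ) :
    thermalFactor κ γ τ =
      ((4 * π / 3 : ℝ) : ℂ) - ((8 * (γ - 1) / (π * γ) : ℝ) : ℂ) * bubbleSeries κ τ := by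
  push_cast
  rfl

theorem thermalFactor_re (κ γ : ℝ) (τ : ℂ) :
    (thermalFactor κ γ τ).re = 4 * π / 3 - 8 * (γ - 1) / (π * γ) * (bubbleSeries κ τ).re := by
  rw [thermalFactor_eq, sub_re, ofReal_re, re_ofReal_mul]

theorem thermalFactor_im (κ γ : ℝ) (τ : ℂ) :
    (thermalFactor κ γ τ).im = -(8 * (γ - 1) / (π * γ) * (bubbleSeries κ τ).im) := by
  rw [thermalFactor_eq, sub_im, ofReal_im, im_ofReal_mul, zero_sub]

theorem thermalFactor_re_pos (hκ : 0 < κ) (hγ : 1 < γ) (hτ : 0 ≤ τ.re) :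
    0 < (thermalFactor κ γ τ).re := by
  have hc : 0 ≤ 8 * (γ - 1) / (π * γ) := by
    have := pi_pos; apply div_nonneg <;> nlinarith
  have hS := mul_le_mul_of_nonneg_left (bubbleSeries_re_le hκ hτ) hc
  have hmax : 8 * (γ - 1) / (π * γ) * (π ^ 2 / 6) = 4 * π / 3 - 4 * π / (3 * γ) := by
    field_simp; ring
  have : 0 < 4 * π / (3 * γ) := by have := pi_pos; positivity
  rw [thermalFactor_re]
  linarith

theorem thermalFactor_re_le (hκ : 0 < κ) (hγ : 1 ≤ γ) (hτ : 0 ≤ τ.re) :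
    (thermalFactor κ γ τ).re ≤ 4 * π / 3 := by
  have hc : 0 ≤ 8 * (γ - 1) / (π * γ) := by
    have := pi_pos; apply div_nonneg <;> nlinarith
  rw [thermalFactor_re]
  nlinarith [bubbleSeries_re_nonneg hκ hτ]

theorem im_mul_thermalFactor_im_neg (hκ : 0 < κ) (hγ : 1 < γ) (hτ : 0 ≤ τ.re)
    (him : τ.im ≠ 0) :
    τ.im * (thermalFactor κ γ τ).im < 0 := by
  have hc : 0 < 8 * (γ - 1) / (π * γ) := by
    have := pi_pos; apply div_pos <;> nlinarith
  rw [thermalFactor_im]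
  nlinarith [im_mul_bubbleSeries_im_pos hκ hτ him]

theorem thermalFactor_ofReal_im (κ γ ξ : ℝ) : (thermalFactor κ γ ξ).im = 0 := by
  rw [thermalFactor_im, bubbleSeries_ofReal_im, mul_zero, neg_zero]

end ThermalFactor

theorem mechanicalFactor_eq (ρl Rs μl σ : ℝ) (τ : ℂ) :
    mechanicalFactor ρl Rs μl σ τ =
      ((ρl * Rs : ℝ) : ℂ) * τ ^ 2 + ((4 * μl / Rs : ℝ) : ℂ) * τ - ((2 * σ / Rs ^ 2 : ℝ) : ℂ) := by
  push_cast
  rfl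

theorem mechanicalFactor_ofReal (ρl Rs μl σ ξ : ℝ) :
    mechanicalFactor ρl Rs μl σ ξ =
      ((ρl * Rs * ξ ^ 2 + 4 * μl / Rs * ξ - 2 * σ / Rs ^ 2 : ℝ) : ℂ) := by
  rw [mechanicalFactor_eq]
  push_cast
  rfl

theorem im_mul_mechanicalFactor_im_nonneg {ρl Rs μl : ℝ} (hρl : 0 ≤ ρl) (hRs : 0 ≤ Rs)
    (hμl : 0 ≤ μl) (σ : ℝ) {τ : ℂ} (hτ : 0 ≤ τ.re) :
    0 ≤ τ.im * (mechanicalFactor ρl Rs μl σ τ).im := by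
  have him : (mechanicalFactor ρl Rs μl σ τ).im =
      ρl * Rs * (2 * τ.re * τ.im) + 4 * μl / Rs * τ.im := by
    rw [mechanicalFactor_eq, sub_im, add_im, im_ofReal_mul, im_ofReal_mul, ofReal_im, pow_two,
      mul_im]
    ring
  rw [him]
  have : 0 ≤ ρl * Rs * τ.re := by positivity
  have : 0 ≤ 4 * μl / Rs := by positivity
  nlinarith [sq_nonneg τ.im]

theorem ofReal_mul_mul_add_ofReal_ne_zero {c C y : ℝ} {A B : ℂ} (hc : 0 < c) (hC : 0 < C)
    (hA : y * A.im < 0) (hB : 0 ≤ y * B.im) : (c : ℂ) * A * B + C ≠ 0 := by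
  intro h
  have key : (starRingEnd ℂ A * ((c : ℂ) * A * B + C)).im = c * normSq A * B.im - C * A.im := by
    simp only [mul_im, mul_re, conj_re, conj_im, ofReal_re, ofReal_im, add_re, add_im, normSq_apply]
    ring
  rw [h, mul_zero, zero_im] at key
  have hy : c * normSq A * (y * B.im) - C * (y * A.im) = 0 := by linear_combination -y * key
  nlinarith [mul_nonneg (mul_nonneg hc.le (normSq_nonneg A)) hB, mul_pos hC (neg_pos.mpr hA)]

theorem Qfun_ofReal_re_pos {κ γ Rg Tinf ρl Rs μl σ ρs pinf : ℝ}
    (hκ : 0 < κ) (hγ : 1 < γ) (hRg : 0 < Rg) (hT : 0 < Tinf)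
    (hρl : 0 < ρl) (hRs : 0 < Rs) (hμl : 0 ≤ μl) (hσ : 0 ≤ σ) (hp : 0 < pinf)
    (hconst : Rg * Tinf * ρs = pinf + 2 * σ / Rs) {ξ : ℝ} (hξ : 0 ≤ ξ) :
    0 < (Qfun κ γ Rg Tinf ρl Rs μl σ ρs ξ).re := by
  have hτ : 0 ≤ (ξ : ℂ).re := hξ
  set A := (thermalFactor κ γ ξ).re
  set B := ρl * Rs * ξ ^ 2 + 4 * μl / Rs * ξ - 2 * σ / Rs ^ 2
  have hQ : (Qfun κ γ Rg Tinf ρl Rs μl σ ρs ξ).re =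
      1 / (Rg * Tinf) * (A * B) + 4 * π * ρs / Rs := by
    rw [Qfun_eq, mechanicalFactor_ofReal, add_re, ofReal_re, mul_assoc, re_ofReal_mul, mul_re,
      ofReal_re, ofReal_im, thermalFactor_ofReal_im, zero_mul, sub_zero]
  have hA0 : 0 ≤ A := (thermalFactor_re_pos hκ hγ hτ).le
  have hA1 : A ≤ 4 * π / 3 := thermalFactor_re_le hκ hγ.le hτ
  have hB : -(2 * σ / Rs ^ 2) ≤ B := by
    have : 0 ≤ ρl * Rs * ξ ^ 2 + 4 * μl / Rs * ξ := by positivity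
    linarith
  have hAB : -(4 * π / 3 * (2 * σ / Rs ^ 2)) ≤ A * B := by
    have : 0 ≤ 2 * σ / Rs ^ 2 := by positivity
    nlinarith [mul_nonneg hA0 (neg_le_iff_add_nonneg.mp hB), mul_nonneg (sub_nonneg.mpr hA1) this]
  have hmargin : 0 < 4 * π * ρs / Rs - 1 / (Rg * Tinf) * (4 * π / 3 * (2 * σ / Rs ^ 2)) := by
    have e : 4 * π * ρs / Rs - 1 / (Rg * Tinf) * (4 * π / 3 * (2 * σ / Rs ^ 2))
        = 4 * π / (Rs * (Rg * Tinf)) * (pinf + 4 * σ / (3 * Rs)) := by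
      have hρs : ρs = (pinf + 2 * σ / Rs) / (Rg * Tinf) := by
        rw [eq_div_iff (by positivity)]
        linear_combination hconst
      rw [hρs]
      field_simp
      ring
    rw [e]
    positivity
  rw [hQ]
  nlinarith [mul_le_mul_of_nonneg_left hAB (show 0 ≤ 1 / (Rg * Tinf) by positivity)]

/-- `Q` has no roots in the closed right half-plane; in particular `Q(ξ) > 0`
for real `ξ ≥ 0`. -/
theorem Q_no_roots_right_half_plane
    (κ γ Rg Tinf ρl Rs μl σ ρs pinf : ℝ)
    (hκ : 0 < κ) (hγ : 1 < γ) (hRg : 0 < Rg) (hT : 0 < Tinf)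
    (hρl : 0 < ρl) (hRs : 0 < Rs) (hμl : 0 ≤ μl) (hσ : 0 ≤ σ)
    (hρs : 0 < ρs) (hp : 0 < pinf)
    (hconst : Rg * Tinf * ρs = pinf + 2 * σ / Rs) :
    (∀ τ : ℂ, 0 ≤ τ.re → Qfun κ γ Rg Tinf ρl Rs μl σ ρs τ ≠ 0) ∧
    (∀ ξ : ℝ, 0 ≤ ξ → 0 < (Qfun κ γ Rg Tinf ρl Rs μl σ ρs (ξ : ℂ)).re) := by
  have hreal : ∀ ξ : ℝ, 0 ≤ ξ → 0 < (Qfun κ γ Rg Tinf ρl Rs μl σ ρs (ξ : ℂ)).re :=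
    fun ξ hξ => Qfun_ofReal_re_pos hκ hγ hRg hT hρl hRs hμl hσ hp hconst hξ
  refine ⟨fun τ hτ => ?_, hreal⟩
  by_cases him : τ.im = 0
  · have hτ_real : τ = (τ.re : ℂ) := Complex.ext rfl (by rw [him, ofReal_im])
    intro hQ
    rw [hτ_real] at hQ
    simpa [hQ] using hreal τ.re hτ
  · rw [Qfun_eq]
    exact ofReal_mul_mul_add_ofReal_ne_zero (by positivity) (by positivity)
      (im_mul_thermalFactor_im_neg hκ hγ hτ him)
      (im_mul_mechanicalFactor_im_nonneg hρl.le hRs.le hμl σ hτ)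
end

section
/- Suppose real numbers ξ, η and positive constants ρ_l, R_*, σ, μ_l ≥ 0 satisfy 2ρ_lR_*ξ + 4μ_l/R_* < 0 (i.e. ξ < -2μ_l/(ρ_lR_*²) ≤ 0). Let Λ = ρ_lR_*(ξ²-η²) + (4μ_l/R_*)ξ - 2σ/R_*² - (2ρ_lR_*ξ + 4μ_l/R_*)(ρ_lR_*ξ(ξ²+η²) + (4μ_l/R_*)(ξ²+η²) - (2σ/R_*²)ξ)/(ρ_lR_*(ξ²+η²) + 2σ/R_*²). Then Λ > -(ρ_lR_*(ξ²+η²) + 2σ/R_*²). -/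
/-!
Write `a = ρ_l R_*`, `m = 4μ_l/R_*`, `s = 2σ/R_*²`, `B = 2aξ + m` and `D = a(ξ² + η²) + s`.
Then `Λ + D = B (2sξ - m(ξ² + η²)) / D`, because the first three terms of `Λ` sum to `ξB - D`.
Since `B < 0` forces `ξ < 0`, both factors of the numerator are negative, and `D > 0`.
-/

section

variable {a m s ξ η : ℝ}

theorem Lambda_add_eq (hD : a * (ξ ^ 2 + η ^ 2) + s ≠ 0) :
    a * (ξ ^ 2 - η ^ 2) + m * ξ - s
        - (2 * a * ξ + m) * (a * ξ * (ξ ^ 2 + η ^ 2) + m * (ξ ^ 2 + η ^ 2) - s * ξ)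
          / (a * (ξ ^ 2 + η ^ 2) + s)
        + (a * (ξ ^ 2 + η ^ 2) + s)
      = (2 * a * ξ + m) * (2 * s * ξ - m * (ξ ^ 2 + η ^ 2)) / (a * (ξ ^ 2 + η ^ 2) + s) := by
  field_simp
  ring

theorem neg_lt_Lambda (ha : 0 < a) (hm : 0 ≤ m) (hs : 0 < s) (hsign : 2 * a * ξ + m < 0) :
    -(a * (ξ ^ 2 + η ^ 2) + s) <
      a * (ξ ^ 2 - η ^ 2) + m * ξ - s
        - (2 * a * ξ + m) * (a * ξ * (ξ ^ 2 + η ^ 2) + m * (ξ ^ 2 + η ^ 2) - s * ξ)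
          / (a * (ξ ^ 2 + η ^ 2) + s) := by
  have hD : 0 < a * (ξ ^ 2 + η ^ 2) + s := by positivity
  have hξ : ξ < 0 := neg_of_mul_neg_right (by linarith : 2 * a * ξ < 0) (by positivity)
  have hnum : 2 * s * ξ - m * (ξ ^ 2 + η ^ 2) < 0 := by
    have : 0 ≤ m * (ξ ^ 2 + η ^ 2) := by positivity
    nlinarith
  have hsum := Lambda_add_eq (m := m) hD.ne'
  have : 0 < (2 * a * ξ + m) * (2 * s * ξ - m * (ξ ^ 2 + η ^ 2)) / (a * (ξ ^ 2 + η ^ 2) + s) :=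
    div_pos (mul_pos_of_neg_of_neg hsign hnum) hD
  linarith

end

/-- The key algebraic inequality in the spectral bound: if
`2ρ_lR_*ξ + 4μ_l/R_* < 0` then
`Λ > -(ρ_lR_*(ξ²+η²) + 2σ/R_*²)`, where `Λ` is as displayed. -/
theorem Lambda_lower_bound (ρl Rs σ μl ξ η : ℝ)
    (hρl : 0 < ρl) (hRs : 0 < Rs) (hσ : 0 < σ) (hμl : 0 ≤ μl)
    (hsign : 2 * ρl * Rs * ξ + 4 * μl / Rs < 0) :
    -(ρl * Rs * (ξ ^ 2 + η ^ 2) + 2 * σ / Rs ^ 2) <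
      ρl * Rs * (ξ ^ 2 - η ^ 2) + (4 * μl / Rs) * ξ - 2 * σ / Rs ^ 2
        - (2 * ρl * Rs * ξ + 4 * μl / Rs) *
            (ρl * Rs * ξ * (ξ ^ 2 + η ^ 2) + (4 * μl / Rs) * (ξ ^ 2 + η ^ 2)
              - (2 * σ / Rs ^ 2) * ξ) /
            (ρl * Rs * (ξ ^ 2 + η ^ 2) + 2 * σ / Rs ^ 2) := by
  rw [mul_assoc 2 ρl Rs] at hsign ⊢
  exact neg_lt_Lambda (mul_pos hρl hRs) (by positivity) (by positivity) hsign
end
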